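/- arXiv:2302.10316 — 5 statements merged into one kernel-verified Lean document; each statement's English description precedes it below -/
import Mathlib

section
/- Let E be a directed graph, V ⊆ E⁰, and H ⊆ E⁰ a hereditary set with V̄ ⊆ H ⊆ R(T(V)). For v ∈ H let P_v(T(V)) be the set of finite paths originating at v and terminating at a vertex of T(V) such that no vertex of the path except its range lies in T(V). Then the following are equivalent: (1) H = V̄; (2) the set H − T(V) contains no infinite emitters, and every infinite path all of whose vertices lie in H contains a vertex of T(V); (3) the set P_v(T(V)) is finite for every v ∈ H. -/
/-- A directed graph: vertices, edges, source and range maps. -/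
structure DGraph where
  V : Type
  Ed : Type
  s : Ed → V
  r : Ed → V

namespace DGraph

variable (E : DGraph)

/-- One-step adjacency: there is an edge from `u` to `v`. -/
def Adj (u v : E.V) : Prop := ∃ e, E.s e = u ∧ E.r e = v

/-- `u ≥ v`: there is a (finite) path from `u` to `v`. -/
def Reaches (u v : E.V) : Prop := Relation.ReflTransGen E.Adj u v

/-- The tree `T(W)` of a set of vertices. -/
def tree (W : Set E.V) : Set E.V := {u | ∃ v ∈ W, E.Reaches v u}

/-- The root `R(W)` of a set of vertices. -/
def root (W : Set E.V) : Set E.V := {u | ∃ v ∈ W, E.Reaches u v}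

/-- The set of edges emitted by `v`. -/
def emits (v : E.V) : Set E.Ed := {e | E.s e = v}

/-- A sink emits no edges. -/
def IsSink (v : E.V) : Prop := E.emits v = ∅

/-- An infinite emitter emits infinitely many edges. -/
def IsInfEmitter (v : E.V) : Prop := (E.emits v).Infinite

/-- A regular vertex is neither a sink nor an infinite emitter. -/
def IsRegular (v : E.V) : Prop := (E.emits v).Nonempty ∧ (E.emits v).Finite

/-- A hereditary set of vertices: `T(H) ⊆ H`. -/
def Hereditary (H : Set E.V) : Prop := ∀ u ∈ H, ∀ v, E.Reaches u v → v ∈ H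

/-- A saturated set of vertices. -/
def Saturated (H : Set E.V) : Prop :=
  ∀ v, E.IsRegular v → (∀ e ∈ E.emits v, E.r e ∈ H) → v ∈ H

/-- The saturated closure of `W`: the smallest hereditary and saturated set containing `W`. -/
def satClosure (W : Set E.V) : Set E.V :=
  ⋂₀ {H : Set E.V | E.Hereditary H ∧ E.Saturated H ∧ W ⊆ H}

/-- `es` is a finite walk (path) starting at `u`; `es = []` is the trivial path at `u`. -/
def IsWalkFrom (u : E.V) (es : List E.Ed) : Prop :=
  es.Chain' (fun e f => E.r e = E.s f) ∧ ∀ e ∈ es.head?, E.s e = u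

/-- The terminal vertex (range) of the walk `es` starting at `u`. -/
def endVert (u : E.V) (es : List E.Ed) : E.V := es.getLast?.elim u E.r

/-- The set of vertices on the walk `es` starting at `u`. -/
def walkVerts (u : E.V) (es : List E.Ed) : Set E.V :=
  insert u {v | ∃ e ∈ es, E.r e = v}

/-- An infinite path. -/
def IsInfPath (f : ℕ → E.Ed) : Prop := ∀ n, E.r (f n) = E.s (f (n + 1))

/-- The set of vertices on an infinite path. -/
def infVerts (f : ℕ → E.Ed) : Set E.V := Set.range fun n => E.s (f n)

/-- Elements of `E^{≤∞}`: finite walks or infinite paths. -/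
inductive GPath (E : DGraph) : Type where
  | fin : E.V → List E.Ed → GPath E
  | inf : (ℕ → E.Ed) → GPath E

/-- Membership in `E^{≤∞}`: a well-formed finite path ending in a sink or an infinite
emitter, or an infinite path. -/
def gmem : GPath E → Prop
  | .fin u es => E.IsWalkFrom u es ∧
      (E.IsSink (E.endVert u es) ∨ E.IsInfEmitter (E.endVert u es))
  | .inf f => E.IsInfPath f

/-- `p⁰`, the vertex set of an element of `E^{≤∞}`. -/
def gverts : GPath E → Set E.V
  | .fin u es => E.walkVerts u es
  | .inf f => E.infVerts f

/-- The graph `E` is cofinal. -/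
def Cofinal : Prop :=
  ∀ v : E.V, ∀ p : GPath E, E.gmem p → ∃ w ∈ E.gverts p, E.Reaches v w

/-- `es` is a cycle based at `u`. -/
def IsCycle (u : E.V) (es : List E.Ed) : Prop :=
  es ≠ [] ∧ E.IsWalkFrom u es ∧ E.endVert u es = u ∧ (es.map E.s).Nodup

/-- The cycle `es` (based at `u`) has an exit. -/
def HasExit (u : E.V) (es : List E.Ed) : Prop :=
  ∃ v ∈ E.walkVerts u es, ∃ e, E.s e = v ∧ e ∉ es

/-- An extreme cycle: a cycle with an exit such that `T(c⁰) ⊆ R(c⁰)`. -/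
def IsExtremeCycle (u : E.V) (es : List E.Ed) : Prop :=
  E.IsCycle u es ∧ E.HasExit u es ∧
    E.tree (E.walkVerts u es) ⊆ E.root (E.walkVerts u es)

/-- `v` lies on some cycle. -/
def OnCycle (v : E.V) : Prop := ∃ u es, E.IsCycle u es ∧ v ∈ E.walkVerts u es

/-- A terminal (infinite) path. -/
def IsTerminalPath (f : ℕ → E.Ed) : Prop :=
  E.IsInfPath f ∧
  (∀ v ∈ E.tree (E.infVerts f), ¬ E.IsInfEmitter v ∧ ¬ E.OnCycle v) ∧
  (∀ g : ℕ → E.Ed, E.IsInfPath g → E.s (g 0) ∈ E.infVerts f →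
      E.tree (E.infVerts g) ⊆ E.root (E.infVerts g))

/-- A terminal vertex: a sink, a vertex on a cycle without exits, a vertex on an
extreme cycle, or a vertex on a terminal path. -/
def IsTerminalVert (v : E.V) : Prop :=
  E.IsSink v ∨
  (∃ u es, E.IsCycle u es ∧ ¬ E.HasExit u es ∧ v ∈ E.walkVerts u es) ∨
  (∃ u es, E.IsExtremeCycle u es ∧ v ∈ E.walkVerts u es) ∨
  (∃ f, E.IsTerminalPath f ∧ v ∈ E.infVerts f)

/-- `p ∼ q` for elements of `E^{≤∞}`: `R(p⁰) = R(q⁰)`. -/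
def pequiv (p q : GPath E) : Prop := E.root (E.gverts p) = E.root (E.gverts q)

/-- `v ≈ w` for terminal vertices. -/
def approx (v w : E.V) : Prop :=
  E.IsTerminalVert v ∧ E.IsTerminalVert w ∧
  ∃ p q : GPath E, E.gmem p ∧ E.gmem q ∧ v ∈ E.gverts p ∧ w ∈ E.gverts q ∧ E.pequiv p q

/-- The cluster of a terminal vertex `v`: its `≈`-equivalence class. -/
def cluster (v : E.V) : Set E.V := {w | E.approx v w}

/-- `C` is a cluster of `E`. -/
def IsCluster (C : Set E.V) : Prop := ∃ v, E.IsTerminalVert v ∧ C = E.cluster v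

/-- `Ter(E)`: the saturated closure of the set of terminal vertices. -/
def Ter : Set E.V := E.satClosure {v | E.IsTerminalVert v}

/-- The set `B_H` of breaking vertices of a (hereditary and saturated) set `H`. -/
def breaking (H : Set E.V) : Set E.V :=
  {v | v ∉ H ∧ E.IsInfEmitter v ∧
    {e | E.s e = v ∧ E.r e ∉ H}.Nonempty ∧ {e | E.s e = v ∧ E.r e ∉ H}.Finite}

/-- `(H, S)` is an admissible pair. -/
def Admissible (H S : Set E.V) : Prop :=
  E.Hereditary H ∧ E.Saturated H ∧ S ⊆ E.breaking H

end DGraph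
namespace DGraph

/-- `P_v(T(W))`: walks originating at `v` and terminating at a vertex of `T(W)`
such that no vertex, except the range, is in `T(W)`. -/
def Pset (E : DGraph) (W : Set E.V) (v : E.V) : Set (List E.Ed) :=
  {es | E.IsWalkFrom v es ∧ E.endVert v es ∈ E.tree W ∧
    ∀ p, p <+: es → p ≠ es → E.endVert v p ∉ E.tree W}

end DGraph

/-!
Every vertex of `W̄` outside `T(W)` is regular, and an infinite path through `W̄` descends the
saturation layers `Λₙ` until it reaches `T(W) = Λ₀`; this gives (1 ⇒ 2). Conversely, under (2)
a vertex of `H \ W̄` reaches `T(W)`, so it emits finitely many edges, and since `W̄` is saturated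
one of them stays in `H \ W̄`: iterating produces an infinite path in `H` avoiding `T(W)`.
For `v ∉ T(W)` the set `P_v` is the disjoint union over edges `e` from `v` of `e · P_{r(e)}`,
so an infinite `P_v` passes to an infinite `P_{r(e)}` along some edge (König's lemma), giving
(2 ⇒ 3); an infinite emitter or an infinite path in `H \ T(W)` instead yields infinitely many
or arbitrarily long elements of `P_v`, giving (3 ⇒ 2).
-/

namespace DGraph

variable {E : DGraph} {W H : Set E.V}

theorem isWalkFrom_nil (u : E.V) : E.IsWalkFrom u [] :=
  ⟨List.isChain_nil, by simp⟩

theorem isWalkFrom_cons_iff {u : E.V} {e : E.Ed} {es : List E.Ed} :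
    E.IsWalkFrom u (e :: es) ↔ E.s e = u ∧ E.IsWalkFrom (E.r e) es := by
  change List.IsChain _ (e :: es) ∧ _ ↔ _ ∧ List.IsChain _ es ∧ _
  simp only [List.isChain_cons, List.head?_cons, Option.mem_def, Option.some.injEq, forall_eq']
  grind

theorem endVert_cons (u : E.V) (e : E.Ed) (es : List E.Ed) :
    E.endVert u (e :: es) = E.endVert (E.r e) es := by
  cases h : es.getLast? <;> simp [endVert, List.getLast?_cons, h]

theorem tree_hereditary : E.Hereditary (E.tree W) := by
  rintro u ⟨w, hw, hwu⟩ v huv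
  exact ⟨w, hw, hwu.trans huv⟩

theorem satClosure_saturated : E.Saturated (E.satClosure W) :=
  fun v hreg hall _ hS => hS.2.1 v hreg fun e he => hall e he _ hS

theorem tree_subset_satClosure : E.tree W ⊆ E.satClosure W := by
  rintro u ⟨w, hw, hwu⟩ S hS
  exact hS.1 w (hS.2.2 hw) u hwu

theorem Hereditary.range_mem (hH : E.Hereditary H) {u : E.V} (hu : u ∈ H) {e : E.Ed}
    (he : E.s e = u) : E.r e ∈ H :=
  hH u hu _ (.single ⟨e, he, rfl⟩)

theorem exists_isInfPath_of_forall_exists_edge {P : E.V → Prop}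
    (hP : ∀ u, P u → ∃ e, E.s e = u ∧ P (E.r e)) {v : E.V} (hv : P v) :
    ∃ f, E.IsInfPath f ∧ ∀ n, P (E.s (f n)) := by
  choose edge hsource hrange using fun x : {u // P u} => hP x x.2
  let next : {u // P u} → {u // P u} := fun x => ⟨E.r (edge x), hrange x⟩
  refine ⟨fun n => edge (next^[n] ⟨v, hv⟩), fun n => ?_, fun n => ?_⟩
  · rw [hsource, Function.iterate_succ_apply']
  · rw [hsource]
    exact (next^[n] _).2

theorem exists_edge_range_mem_diff {S : Set E.V} (hH : E.Hereditary H)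
    (hroot : H ⊆ E.root (E.tree W)) (hS : E.Saturated S) (hWS : E.tree W ⊆ S)
    (hreg : ∀ v ∈ H \ E.tree W, ¬ E.IsInfEmitter v) {u : E.V} (hu : u ∈ H \ S) :
    ∃ e, E.s e = u ∧ E.r e ∈ H \ S := by
  have huW : u ∉ E.tree W := fun h => hu.2 (hWS h)
  obtain ⟨t, ht, hut⟩ := hroot hu.1
  have hemits : (E.emits u).Nonempty := by
    rcases hut.cases_head with rfl | ⟨c, ⟨e, he, -⟩, -⟩
    · exact absurd ht huW
    · exact ⟨e, he⟩
  by_contra! hno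
  refine hu.2 (hS u ⟨hemits, Set.not_infinite.mp (hreg u ⟨hu.1, huW⟩)⟩ fun e he => ?_)
  by_contra heS
  exact hno e he ⟨hH.range_mem hu.1 he, heS⟩

theorem subset_satClosure_of_forall_isInfPath (hH : E.Hereditary H)
    (hroot : H ⊆ E.root (E.tree W)) (hreg : ∀ v ∈ H \ E.tree W, ¬ E.IsInfEmitter v)
    (hpath : ∀ f, E.IsInfPath f → E.infVerts f ⊆ H → ∃ n, E.s (f n) ∈ E.tree W) :
    H ⊆ E.satClosure W := by
  by_contra! hsub
  obtain ⟨v, hv⟩ := Set.not_subset.mp hsub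
  obtain ⟨f, hf, hfH⟩ := exists_isInfPath_of_forall_exists_edge (fun u hu =>
    exists_edge_range_mem_diff hH hroot satClosure_saturated tree_subset_satClosure hreg hu) hv
  obtain ⟨n, hn⟩ := hpath f hf (Set.range_subset_iff.mpr fun n => (hfH n).1)
  exact (hfH n).2 (tree_subset_satClosure hn)

/-- The saturation layers `Λₙ`, whose union is `W̄`. -/
def satLayer (E : DGraph) (W : Set E.V) : ℕ → Set E.V
  | 0 => E.tree W
  | n + 1 => satLayer E W n ∪ {v | E.IsRegular v ∧ ∀ e ∈ E.emits v, E.r e ∈ satLayer E W n}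

theorem satLayer_hereditary : ∀ n, E.Hereditary (E.satLayer W n)
  | 0 => tree_hereditary
  | n + 1 => by
    rintro u (hu | hu) v huv
    · exact Or.inl (satLayer_hereditary n u hu v huv)
    · rcases huv.cases_head with rfl | ⟨c, ⟨e, he, rfl⟩, hcv⟩
      · exact Or.inr hu
      · exact Or.inl (satLayer_hereditary n _ (hu.2 e he) v hcv)

theorem satLayer_mono : Monotone (E.satLayer W) :=
  monotone_nat_of_le_succ fun _ => Set.subset_union_left

theorem satClosure_subset_iUnion_satLayer : E.satClosure W ⊆ ⋃ n, E.satLayer W n := by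
  refine Set.sInter_subset_of_mem ⟨?_, ?_, fun w hw => Set.mem_iUnion.mpr ⟨0, w, hw, .refl⟩⟩
  · intro u hu v huv
    obtain ⟨n, hn⟩ := Set.mem_iUnion.mp hu
    exact Set.mem_iUnion.mpr ⟨n, satLayer_hereditary n u hn v huv⟩
  · intro v hreg hall
    choose layer hlayer using fun e : E.emits v => Set.mem_iUnion.mp (hall e e.2)
    have : Finite (E.emits v) := hreg.2.to_subtype
    obtain ⟨N, hN⟩ := Finite.exists_le layer
    exact Set.mem_iUnion.mpr
      ⟨N + 1, Or.inr ⟨hreg, fun e he => satLayer_mono (hN ⟨e, he⟩) (hlayer ⟨e, he⟩)⟩⟩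

theorem mem_tree_or_isRegular_of_mem_satLayer :
    ∀ n, ∀ v ∈ E.satLayer W n, v ∈ E.tree W ∨ E.IsRegular v
  | 0, _, hv => Or.inl hv
  | n + 1, v, hv => hv.elim (mem_tree_or_isRegular_of_mem_satLayer n v) fun h => Or.inr h.1

theorem not_isInfEmitter_of_mem_satClosure_diff {v : E.V} (hv : v ∈ E.satClosure W \ E.tree W) :
    ¬ E.IsInfEmitter v := by
  obtain ⟨n, hn⟩ := Set.mem_iUnion.mp (satClosure_subset_iUnion_satLayer hv.1)
  exact (mem_tree_or_isRegular_of_mem_satLayer n v hn).resolve_left hv.2 |>.2.not_infinite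

theorem IsInfPath.exists_mem_tree_of_mem_satLayer {f : ℕ → E.Ed} (hf : E.IsInfPath f) :
    ∀ n k, E.s (f k) ∈ E.satLayer W n → ∃ m, E.s (f m) ∈ E.tree W
  | 0, k, hk => ⟨k, hk⟩
  | n + 1, k, hk => hk.elim (hf.exists_mem_tree_of_mem_satLayer n k) fun h =>
      hf.exists_mem_tree_of_mem_satLayer n (k + 1) (hf k ▸ h.2 (f k) rfl)

theorem IsInfPath.exists_mem_tree_of_mem_satClosure {f : ℕ → E.Ed} (hf : E.IsInfPath f)
    (h : E.s (f 0) ∈ E.satClosure W) : ∃ n, E.s (f n) ∈ E.tree W := by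
  obtain ⟨n, hn⟩ := Set.mem_iUnion.mp (satClosure_subset_iUnion_satLayer h)
  exact hf.exists_mem_tree_of_mem_satLayer n 0 hn

theorem Pset_eq_singleton_nil {u : E.V} (hu : u ∈ E.tree W) : E.Pset W u = {[]} := by
  refine Set.eq_singleton_iff_unique_mem.mpr ⟨⟨isWalkFrom_nil u, hu, ?_⟩, ?_⟩
  · exact fun p hp hne => absurd (List.prefix_nil.mp hp) hne
  · intro es hes
    by_contra hne
    exact hes.2.2 [] List.nil_prefix (Ne.symm hne) hu

theorem nil_not_mem_Pset {u : E.V} (hu : u ∉ E.tree W) : [] ∉ E.Pset W u :=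
  fun h => hu h.2.1

theorem cons_mem_Pset_iff {u : E.V} (hu : u ∉ E.tree W) {e : E.Ed} {es : List E.Ed} :
    e :: es ∈ E.Pset W u ↔ E.s e = u ∧ es ∈ E.Pset W (E.r e) := by
  simp only [Pset, Set.mem_ofPred_eq, isWalkFrom_cons_iff, endVert_cons]
  constructor
  · rintro ⟨⟨hs, hw⟩, hend, hmin⟩
    refine ⟨hs, hw, hend, fun q hq hne => ?_⟩
    simpa only [endVert_cons] using
      hmin (e :: q) (List.cons_prefix_cons.mpr ⟨rfl, hq⟩) (by simpa using hne)
  · rintro ⟨hs, hw, hend, hmin⟩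
    refine ⟨⟨hs, hw⟩, hend, fun p hp hne => ?_⟩
    rcases List.prefix_cons_iff.mp hp with rfl | ⟨q, rfl, hq⟩
    · exact hu
    · rw [endVert_cons]
      exact hmin q hq (by rintro rfl; exact hne rfl)

theorem Pset_eq_biUnion {u : E.V} (hu : u ∉ E.tree W) :
    E.Pset W u = ⋃ e ∈ E.emits u, List.cons e '' E.Pset W (E.r e) := by
  ext (_ | ⟨e, es⟩)
  · simp [nil_not_mem_Pset hu]
  · simp [cons_mem_Pset_iff hu, emits, and_comm]

theorem Pset_finite_of_mem_tree {u : E.V} (hu : u ∈ E.tree W) : (E.Pset W u).Finite :=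
  (Pset_eq_singleton_nil hu).symm ▸ Set.finite_singleton _

theorem Pset_nonempty_of_mem_root {u : E.V} (hu : u ∈ E.root (E.tree W)) :
    (E.Pset W u).Nonempty := by
  obtain ⟨t, ht, hut⟩ := hu
  induction hut using Relation.ReflTransGen.head_induction_on with
  | refl => exact (Pset_eq_singleton_nil ht).symm ▸ Set.singleton_nonempty _
  | @head u c huc _ ih =>
    by_cases huW : u ∈ E.tree W
    · exact (Pset_eq_singleton_nil huW).symm ▸ Set.singleton_nonempty _
    obtain ⟨e, he, rfl⟩ := huc
    obtain ⟨es, hes⟩ := ih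
    exact ⟨e :: es, (cons_mem_Pset_iff huW).mpr ⟨he, hes⟩⟩

theorem exists_edge_Pset_infinite {u : E.V} (hu : u ∉ E.tree W) (hfin : (E.emits u).Finite)
    (hinf : (E.Pset W u).Infinite) : ∃ e, E.s e = u ∧ (E.Pset W (E.r e)).Infinite := by
  by_contra! h
  rw [Pset_eq_biUnion hu] at hinf
  exact hinf (hfin.biUnion fun e he => (h e he).image _)

theorem Pset_finite_of_forall_isInfPath (hH : E.Hereditary H)
    (hreg : ∀ v ∈ H \ E.tree W, ¬ E.IsInfEmitter v)
    (hpath : ∀ f, E.IsInfPath f → E.infVerts f ⊆ H → ∃ n, E.s (f n) ∈ E.tree W)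
    {v : E.V} (hv : v ∈ H) : (E.Pset W v).Finite := by
  have hstep : ∀ u, u ∈ H ∧ (E.Pset W u).Infinite →
      ∃ e, E.s e = u ∧ E.r e ∈ H ∧ (E.Pset W (E.r e)).Infinite := by
    rintro u ⟨huH, huinf⟩
    have huW : u ∉ E.tree W := fun h => huinf (Pset_finite_of_mem_tree h)
    obtain ⟨e, he, heinf⟩ :=
      exists_edge_Pset_infinite huW (Set.not_infinite.mp (hreg u ⟨huH, huW⟩)) huinf
    exact ⟨e, he, hH.range_mem huH he, heinf⟩
  by_contra hinf
  obtain ⟨f, hf, hfP⟩ := exists_isInfPath_of_forall_exists_edge hstep ⟨hv, hinf⟩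
  obtain ⟨n, hn⟩ := hpath f hf (Set.range_subset_iff.mpr fun n => (hfP n).1)
  exact (hfP n).2 (Pset_finite_of_mem_tree hn)

theorem not_isInfEmitter_of_Pset_finite {v : E.V} (hv : v ∉ E.tree W)
    (hroot : ∀ e ∈ E.emits v, E.r e ∈ E.root (E.tree W)) (hfin : (E.Pset W v).Finite) :
    ¬ E.IsInfEmitter v := by
  intro hinf
  have hheads : Option.some '' E.emits v ⊆ List.head? '' E.Pset W v := by
    rintro _ ⟨e, he, rfl⟩
    obtain ⟨es, hes⟩ := Pset_nonempty_of_mem_root (hroot e he)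
    exact ⟨e :: es, (cons_mem_Pset_iff hv).mpr ⟨he, hes⟩, rfl⟩
  exact ((hinf.image (Option.some_injective _).injOn).mono hheads).of_image _ hfin

theorem IsInfPath.exists_mem_tree_of_Pset_finite {f : ℕ → E.Ed} (hf : E.IsInfPath f)
    (hroot : E.infVerts f ⊆ E.root (E.tree W)) (hfin : (E.Pset W (E.s (f 0))).Finite) :
    ∃ n, E.s (f n) ∈ E.tree W := by
  by_contra! hno
  have hlong : ∀ n k, ∃ es ∈ E.Pset W (E.s (f k)), n ≤ es.length := by
    intro n
    induction n with
    | zero =>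
      intro k
      obtain ⟨es, hes⟩ := Pset_nonempty_of_mem_root (hroot ⟨k, rfl⟩)
      exact ⟨es, hes, Nat.zero_le _⟩
    | succ n ih =>
      intro k
      obtain ⟨es, hes, hlen⟩ := ih (k + 1)
      exact ⟨f k :: es, (cons_mem_Pset_iff (hno k)).mpr ⟨rfl, hf k ▸ hes⟩, by simpa using hlen⟩
  obtain ⟨N, hN⟩ := (hfin.image List.length).bddAbove
  obtain ⟨es, hes, hlen⟩ := hlong (N + 1) 0
  have := hN ⟨es, hes, rfl⟩
  omega

end DGraph

/-- Lemma on saturated closures. -/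
theorem saturated_closure_tfae (E : DGraph) (W H : Set E.V)
    (hH : E.Hereditary H) (h1 : E.satClosure W ⊆ H) (h2 : H ⊆ E.root (E.tree W)) :
    List.TFAE [
      H = E.satClosure W,
      (∀ v ∈ H \ E.tree W, ¬ E.IsInfEmitter v) ∧
        ∀ f : ℕ → E.Ed, E.IsInfPath f → E.infVerts f ⊆ H → ∃ n, E.s (f n) ∈ E.tree W,
      ∀ v ∈ H, (E.Pset W v).Finite ] := by
  tfae_have 1 → 2 := by
    rintro rfl
    exact ⟨fun v hv => DGraph.not_isInfEmitter_of_mem_satClosure_diff hv,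
      fun f hf hsub => hf.exists_mem_tree_of_mem_satClosure (hsub ⟨0, rfl⟩)⟩
  tfae_have 2 → 1 := fun ⟨hreg, hpath⟩ =>
    (DGraph.subset_satClosure_of_forall_isInfPath hH h2 hreg hpath).antisymm h1
  tfae_have 2 → 3 := fun ⟨hreg, hpath⟩ _ hv =>
    DGraph.Pset_finite_of_forall_isInfPath hH hreg hpath hv
  tfae_have 3 → 2 := fun h3 =>
    ⟨fun v hv => DGraph.not_isInfEmitter_of_Pset_finite hv.2
        (fun _ he => h2 (hH.range_mem hv.1 he)) (h3 v hv.1),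
      fun f hf hsub => hf.exists_mem_tree_of_Pset_finite (hsub.trans h2) (h3 _ (hsub ⟨0, rfl⟩))⟩
  tfae_finish
end

section
/- Let R be a (possibly nonunital) associative ring, let J be a two-sided ideal of R which, as a ring, is locally unital, and let I be a two-sided ideal of the ring J. Then I is a two-sided ideal of R. -/
/-! A local unit `u ∈ J` of `x ∈ I` lets one write `r * x = (r * u) * x` and `x * r = x * (u * r)`,
where `r * u` and `u * r` lie in `J`. -/

section Semigroup

variable {M : Type*} [Semigroup M] {J I : Set M}

theorem mul_mem_of_mul_eq_self_left (hJ : ∀ r, ∀ u ∈ J, r * u ∈ J)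
    (hI : ∀ j ∈ J, ∀ x ∈ I, j * x ∈ I) {u x : M} (hu : u ∈ J) (hux : u * x = x) (hx : x ∈ I)
    (r : M) : r * x ∈ I := by
  have hrx : r * x = r * u * x := by rw [mul_assoc, hux]
  exact hrx ▸ hI _ (hJ r u hu) x hx

theorem mul_mem_of_mul_eq_self_right (hJ : ∀ r, ∀ u ∈ J, u * r ∈ J)
    (hI : ∀ j ∈ J, ∀ x ∈ I, x * j ∈ I) {u x : M} (hu : u ∈ J) (hxu : x * u = x) (hx : x ∈ I)
    (r : M) : x * r ∈ I := by
  have hxr : x * r = x * (u * r) := by rw [← mul_assoc, hxu]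
  exact hxr ▸ hI _ (hJ r u hu) x hx

end Semigroup

theorem ideal_of_locally_unital_ideal_is_ideal_general
    {R : Type*} [NonUnitalRing R] (J I : Set R)
    -- `J` is a two-sided ideal of `R`:
    (hJmul : ∀ r : R, ∀ x ∈ J, r * x ∈ J ∧ x * r ∈ J)
    -- `J` is locally unital as a ring:
    (hJlu : ∀ F : Finset R, ↑F ⊆ J →
      ∃ u ∈ J, u * u = u ∧ ∀ x ∈ F, x * u = x ∧ u * x = x)
    -- `I` is a two-sided ideal of the ring `J`:
    (hIJ : I ⊆ J)
    (hImul : ∀ j ∈ J, ∀ x ∈ I, j * x ∈ I ∧ x * j ∈ I) :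
    -- then `I` is a two-sided ideal of `R`:
    ∀ r : R, ∀ x ∈ I, r * x ∈ I ∧ x * r ∈ I := by
  intro r x hx
  obtain ⟨u, huJ, -, hu⟩ := hJlu {x} (by simpa using hIJ hx)
  obtain ⟨hxu, hux⟩ := hu x (Finset.mem_singleton_self x)
  exact ⟨mul_mem_of_mul_eq_self_left (fun r u hu => (hJmul r u hu).1)
      (fun j hj x hx => (hImul j hj x hx).1) huJ hux hx r,
    mul_mem_of_mul_eq_self_right (fun r u hu => (hJmul r u hu).2)
      (fun j hj x hx => (hImul j hj x hx).2) huJ hxu hx r⟩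

/-- If `R` is a (possibly nonunital) associative ring, `J` is a
two-sided ideal of `R` which is locally unital as a ring, and `I` is a two-sided
ideal of the ring `J`, then `I` is a two-sided ideal of `R`. -/
theorem ideal_of_locally_unital_ideal_is_ideal
    {R : Type*} [NonUnitalRing R] (J I : Set R)
    -- `J` is a two-sided ideal of `R`:
    (hJ0 : (0 : R) ∈ J) (hJadd : ∀ x ∈ J, ∀ y ∈ J, x + y ∈ J)
    (hJneg : ∀ x ∈ J, -x ∈ J)
    (hJmul : ∀ r : R, ∀ x ∈ J, r * x ∈ J ∧ x * r ∈ J)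
    -- `J` is locally unital as a ring:
    (hJlu : ∀ F : Finset R, ↑F ⊆ J →
      ∃ u ∈ J, u * u = u ∧ ∀ x ∈ F, x * u = x ∧ u * x = x)
    -- `I` is a two-sided ideal of the ring `J`:
    (hIJ : I ⊆ J)
    (hI0 : (0 : R) ∈ I) (hIadd : ∀ x ∈ I, ∀ y ∈ I, x + y ∈ I)
    (hIneg : ∀ x ∈ I, -x ∈ I)
    (hImul : ∀ j ∈ J, ∀ x ∈ I, j * x ∈ I ∧ x * j ∈ I) :
    -- then `I` is a two-sided ideal of `R`:
    ∀ r : R, ∀ x ∈ I, r * x ∈ I ∧ x * r ∈ I :=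
  ideal_of_locally_unital_ideal_is_ideal_general J I hJmul hJlu hIJ hImul
end

section
/- Let E be a directed graph with E⁰ nonempty. Then E is cofinal if and only if the relation ∼ on E^{≤∞} has exactly one equivalence class, i.e., R(p⁰) = R(q⁰) for all p, q ∈ E^{≤∞}. -/
/-! Cofinality says exactly that `R(p⁰) = E⁰` for every `p ∈ E^{≤∞}`, which gives one direction.
Conversely, every vertex `v` lies in the root of some `q ∈ E^{≤∞}`: if every vertex reachable
from `v` is regular, choosing an outgoing edge at each step yields an infinite path from `v`;
otherwise `v` reaches a sink or an infinite emitter, and the trivial path there lies in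
`E^{≤∞}`. Then `v ∈ R(q⁰) = R(p⁰)` for every `p`. -/

namespace DGraph

variable (E : DGraph)

theorem cofinal_iff_root_gverts_eq_univ :
    E.Cofinal ↔ ∀ p : GPath E, E.gmem p → E.root (E.gverts p) = Set.univ := by
  simp only [Cofinal, Set.eq_univ_iff_forall, root, Set.mem_ofPred_eq]
  exact ⟨fun h p hp v => h v p hp, fun h v p hp => h p hp v⟩

theorem gmem_fin_nil_of_not_isRegular {v : E.V} (hv : ¬ E.IsRegular v) :
    E.gmem (.fin v []) := by
  refine ⟨⟨List.isChain_nil, by simp⟩, ?_⟩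
  rw [IsRegular, not_and_or, Set.not_nonempty_iff_eq_empty] at hv
  exact hv

theorem exists_isInfPath_of_forall_isRegular {v : E.V}
    (h : ∀ u, E.Reaches v u → E.IsRegular u) :
    ∃ f, E.IsInfPath f ∧ E.s (f 0) = v := by
  choose e he using fun u (hu : E.Reaches v u) => (h u hu).1
  let w : ℕ → {u // E.Reaches v u} := fun n =>
    Nat.rec ⟨v, .refl⟩ (fun _ u => ⟨E.r (e u.1 u.2), u.2.tail ⟨_, he u.1 u.2, rfl⟩⟩) n
  exact ⟨fun n => e (w n).1 (w n).2, fun n => (he _ _).symm, he _ _⟩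

theorem exists_gmem_mem_root_gverts (v : E.V) :
    ∃ q : GPath E, E.gmem q ∧ v ∈ E.root (E.gverts q) := by
  by_cases h : ∀ u, E.Reaches v u → E.IsRegular u
  · obtain ⟨f, hf, hf0⟩ := E.exists_isInfPath_of_forall_isRegular h
    exact ⟨.inf f, hf, E.s (f 0), ⟨0, rfl⟩, hf0 ▸ .refl⟩
  · push Not at h
    obtain ⟨u, hvu, hu⟩ := h
    exact ⟨.fin u [], E.gmem_fin_nil_of_not_isRegular hu, u, Set.mem_insert _ _, hvu⟩

end DGraph

theorem cofinal_iff_one_class_general (E : DGraph) :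
    E.Cofinal ↔
      ∀ p q : DGraph.GPath E, E.gmem p → E.gmem q →
        E.root (E.gverts p) = E.root (E.gverts q) := by
  rw [E.cofinal_iff_root_gverts_eq_univ]
  constructor
  · intro h p q hp hq
    rw [h p hp, h q hq]
  · intro h p hp
    refine Set.eq_univ_of_forall fun v => ?_
    obtain ⟨q, hq, hv⟩ := E.exists_gmem_mem_root_gverts v
    rwa [h q p hq hp] at hv

/-- Corollary: a graph with nonempty vertex set is cofinal if and
only if the relation `∼` on `E^{≤∞}` has exactly one equivalence class, i.e.,
`R(p⁰) = R(q⁰)` for all `p, q ∈ E^{≤∞}`. -/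
theorem cofinal_iff_one_class (E : DGraph) (hne : Nonempty E.V) :
    E.Cofinal ↔
      ∀ p q : DGraph.GPath E, E.gmem p → E.gmem q →
        E.root (E.gverts p) = E.root (E.gverts q) :=
  cofinal_iff_one_class_general E
end

section
/- Let E be a directed graph and α a terminal path of E. Then every infinite path β originating at a vertex of α (i.e., with s(β) ∈ α⁰) is terminal and satisfies R(α⁰) = R(β⁰). -/
/-!
The vertices of `β` lie in the tree of `α`, so `β` inherits the first condition of terminality
from `α`. For the second, an infinite path `γ` leaving a vertex of `β` is prolonged backwards
along `β` to an infinite path leaving `α⁰`; its tree contains `T(γ⁰)` and its root equals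
`R(γ⁰)`. Finally each vertex of `α` either reaches `s(β)` or is reached from it, and in the
latter case it lies in `T(β⁰) ⊆ R(β⁰)`; conversely `β⁰ ⊆ T(α⁰) ⊆ R(α⁰)`.
-/

namespace DGraph

variable {E : DGraph}

theorem tree_mono {W W' : Set E.V} (h : W ⊆ W') : E.tree W ⊆ E.tree W' := by
  rintro u ⟨v, hv, hvu⟩
  exact ⟨v, h hv, hvu⟩

theorem tree_subset_tree {W W' : Set E.V} (h : W ⊆ E.tree W') : E.tree W ⊆ E.tree W' := by
  rintro u ⟨v, hv, hvu⟩
  obtain ⟨w, hw, hwv⟩ := h hv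
  exact ⟨w, hw, hwv.trans hvu⟩

theorem root_subset_root {W W' : Set E.V} (h : W ⊆ E.root W') : E.root W ⊆ E.root W' := by
  rintro u ⟨v, hv, huv⟩
  obtain ⟨w, hw, hvw⟩ := h hv
  exact ⟨w, hw, huv.trans hvw⟩

theorem IsInfPath.reaches {g : ℕ → E.Ed} (hg : E.IsInfPath g) {i j : ℕ} (hij : i ≤ j) :
    E.Reaches (E.s (g i)) (E.s (g j)) := by
  induction j, hij using Nat.le_induction with
  | base => exact .refl
  | succ j _ ih => exact ih.tail ⟨g j, rfl, hg j⟩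

theorem IsInfPath.infVerts_subset_tree {g : ℕ → E.Ed} (hg : E.IsInfPath g) {W : Set E.V}
    (h0 : E.s (g 0) ∈ W) : E.infVerts g ⊆ E.tree W := by
  rintro v ⟨k, rfl⟩
  exact ⟨_, h0, hg.reaches k.zero_le⟩

def spliceAt (g : ℕ → E.Ed) (m : ℕ) (h : ℕ → E.Ed) : ℕ → E.Ed :=
  fun n => if n < m then g n else h (n - m)

section spliceAt

variable {g h : ℕ → E.Ed} {m : ℕ}

theorem IsInfPath.spliceAt (hg : E.IsInfPath g) (hh : E.IsInfPath h)
    (hs : E.s (g m) = E.s (h 0)) : E.IsInfPath (spliceAt g m h) := by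
  intro n
  unfold DGraph.spliceAt
  rcases lt_trichotomy (n + 1) m with hlt | rfl | hgt
  · rw [if_pos (by omega), if_pos hlt]
    exact hg n
  · rw [if_pos n.lt_succ_self, if_neg (lt_irrefl _), Nat.sub_self, ← hs]
    exact hg n
  · rw [if_neg (by omega), if_neg (by omega), show n + 1 - m = n - m + 1 by omega]
    exact hh (n - m)

theorem source_spliceAt_zero (hs : E.s (g m) = E.s (h 0)) :
    E.s (spliceAt g m h 0) = E.s (g 0) := by
  rcases m.eq_zero_or_pos with rfl | hm
  · exact hs.symm
  · simp only [DGraph.spliceAt, if_pos hm]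

theorem infVerts_subset_infVerts_spliceAt : E.infVerts h ⊆ E.infVerts (spliceAt g m h) := by
  rintro v ⟨k, rfl⟩
  refine ⟨k + m, ?_⟩
  simp only [DGraph.spliceAt, if_neg (by omega : ¬ k + m < m), Nat.add_sub_cancel]

theorem infVerts_spliceAt_subset_root (hg : E.IsInfPath g) (hs : E.s (g m) = E.s (h 0)) :
    E.infVerts (spliceAt g m h) ⊆ E.root (E.infVerts h) := by
  rintro v ⟨n, rfl⟩
  by_cases hn : n < m
  · simp only [DGraph.spliceAt, if_pos hn]
    exact ⟨E.s (h 0), ⟨0, rfl⟩, hs ▸ hg.reaches hn.le⟩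
  · simp only [DGraph.spliceAt, if_neg hn]
    exact ⟨_, ⟨n - m, rfl⟩, .refl⟩

end spliceAt

theorem IsTerminalPath.tree_subset_root_of_source_mem {f g h : ℕ → E.Ed}
    (hf : E.IsTerminalPath f) (hg : E.IsInfPath g) (hg0 : E.s (g 0) ∈ E.infVerts f)
    (hh : E.IsInfPath h) (hh0 : E.s (h 0) ∈ E.infVerts g) :
    E.tree (E.infVerts h) ⊆ E.root (E.infVerts h) := by
  obtain ⟨m, hm⟩ := hh0
  have hk0 : E.s (spliceAt g m h 0) ∈ E.infVerts f := source_spliceAt_zero hm ▸ hg0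
  calc E.tree (E.infVerts h)
      ⊆ E.tree (E.infVerts (spliceAt g m h)) := tree_mono infVerts_subset_infVerts_spliceAt
    _ ⊆ E.root (E.infVerts (spliceAt g m h)) := hf.2.2 _ (hg.spliceAt hh hm) hk0
    _ ⊆ E.root (E.infVerts h) := root_subset_root (infVerts_spliceAt_subset_root hg hm)

theorem IsTerminalPath.root_infVerts_eq {f g : ℕ → E.Ed} (hf : E.IsTerminalPath f)
    (hg : E.IsInfPath g) (h0 : E.s (g 0) ∈ E.infVerts f) :
    E.root (E.infVerts f) = E.root (E.infVerts g) := by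
  have hgf : E.infVerts g ⊆ E.tree (E.infVerts f) := hg.infVerts_subset_tree h0
  refine (root_subset_root ?_).antisymm (root_subset_root (hgf.trans (hf.2.2 f hf.1 ⟨0, rfl⟩)))
  obtain ⟨n₀, hn₀ : E.s (f n₀) = E.s (g 0)⟩ := h0
  rintro v ⟨n, rfl⟩
  rcases le_total n n₀ with hle | hle
  · exact ⟨E.s (g 0), ⟨0, rfl⟩, hn₀ ▸ hf.1.reaches hle⟩
  · exact hf.2.2 g hg ⟨n₀, hn₀⟩ ⟨E.s (g 0), ⟨0, rfl⟩, hn₀ ▸ hf.1.reaches hle⟩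

end DGraph

/-- Lemma, part 1: every infinite path originating at a vertex of a
terminal path `α` is terminal, and `R(α⁰) = R(β⁰)`. -/
theorem infPath_from_terminal_is_terminal (E : DGraph) (f : ℕ → E.Ed)
    (hf : E.IsTerminalPath f) (g : ℕ → E.Ed) (hg : E.IsInfPath g)
    (h0 : E.s (g 0) ∈ E.infVerts f) :
    E.IsTerminalPath g ∧ E.root (E.infVerts f) = E.root (E.infVerts g) := by
  have htree : E.tree (E.infVerts g) ⊆ E.tree (E.infVerts f) :=
    DGraph.tree_subset_tree (hg.infVerts_subset_tree h0)
  exact ⟨⟨hg, fun v hv => hf.2.1 v (htree hv),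
    fun _ hh hh0 => hf.tree_subset_root_of_source_mem hg h0 hh hh0⟩, hf.root_infVerts_eq hg h0⟩
end

section
/- Let E be a directed graph. If there is a sequence (Hₙ, Sₙ), n = 0, 1, 2, …, of admissible pairs of E such that either (∅,∅) < (H₀,S₀) < (H₁,S₁) < … is strictly increasing or (E⁰,∅) > (H₀,S₀) > (H₁,S₁) > … is strictly decreasing (the chain never becoming constant), then E does not have a composition series. -/
namespace DGraph

variable (E : DGraph)

/-- The set `B_H^G`. -/
def BHG (H G : Set E.V) : Set E.V :=
  {v | v ∉ H ∧ E.IsInfEmitter v ∧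
    {e | E.s e = v ∧ E.r e ∈ G \ H}.Nonempty ∧ {e | E.s e = v ∧ E.r e ∈ G \ H}.Finite}

/-- The set `F₁(G−H, T−S)` of paths (recorded as nonempty edge lists). -/
def F1 (H S G T : Set E.V) : Set (List E.Ed) :=
  {es | es ≠ [] ∧ es.Chain' (fun e f => E.r e = E.s f) ∧
    ∀ e ∈ es.getLast?, E.r e ∈ G \ H ∧ E.s e ∉ (G \ H) ∪ (T \ S)}

/-- The set `F₂(G−H, T−S)` of paths (recorded as nonempty edge lists). -/
def F2 (S T : Set E.V) : Set (List E.Ed) :=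
  {es | es ≠ [] ∧ es.Chain' (fun e f => E.r e = E.s f) ∧
    ∀ e ∈ es.getLast?, E.r e ∈ T \ S}

/-- Raw vertices of the porcupine-quotient graph: old vertices `v`, vertices `w^p`,
and vertices `v'`. -/
inductive PQV (E : DGraph) : Type where
  | old : E.V → PQV E
  | wp : List E.Ed → PQV E
  | pr : E.V → PQV E

/-- Raw edges of the porcupine-quotient graph: old edges `e`, edges `f^p`,
and edges `e'`. -/
inductive PQE (E : DGraph) : Type where
  | old : E.Ed → PQE E
  | fp : List E.Ed → PQE E
  | pr : E.Ed → PQE E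

/-- Validity of a raw porcupine-quotient vertex. -/
def PQVok (H S G T : Set E.V) : PQV E → Prop
  | .old v => v ∈ (G \ H) ∪ (T \ S)
  | .wp es => es ∈ E.F1 H S G T ∪ E.F2 S T
  | .pr v => v ∈ ((G ∪ T) \ S) ∩ E.BHG H G

/-- Validity of a raw porcupine-quotient edge. -/
def PQEok (H S G T : Set E.V) : PQE E → Prop
  | .old e => E.r e ∈ G \ H ∧ E.s e ∈ (G \ H) ∪ (T \ S)
  | .fp es => es ∈ E.F1 H S G T ∪ E.F2 S T
  | .pr e => E.r e ∈ ((G ∪ T) \ S) ∩ E.BHG H G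

open Classical in
/-- The source of a raw porcupine-quotient edge. -/
noncomputable def PQsrc (H S G T : Set E.V) : PQE E → PQV E
  | .old e => .old (E.s e)
  | .fp es => .wp es
  | .pr e => if E.s e ∈ (G \ H) ∪ (T \ S) then .old (E.s e) else .wp [e]

/-- The range of a raw porcupine-quotient edge. -/
def PQrng : PQE E → PQV E
  | .old e => .old (E.r e)
  | .fp [] => .wp []
  | .fp [e] => .old (E.r e)
  | .fp (_ :: f :: q) => .wp (f :: q)
  | .pr e => .pr (E.r e)

theorem PQsrc_ok {H S G T : Set E.V} {x : PQE E} (hx : E.PQEok H S G T x) :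
    E.PQVok H S G T (E.PQsrc H S G T x) := by
  classical
  cases x with
  | old e => exact hx.2
  | fp es => exact hx
  | pr e =>
    obtain ⟨hGT, hB⟩ := hx
    show E.PQVok H S G T (if E.s e ∈ (G \ H) ∪ (T \ S) then .old (E.s e) else .wp [e])
    by_cases h : E.s e ∈ (G \ H) ∪ (T \ S)
    · rw [if_pos h]; exact h
    · rw [if_neg h]
      by_cases hG : E.r e ∈ G
      · refine Or.inl ⟨by simp, List.isChain_singleton e, ?_⟩
        intro a ha
        simp only [List.getLast?_singleton, Option.mem_some_iff] at ha
        subst ha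
        exact ⟨⟨hG, hB.1⟩, h⟩
      · refine Or.inr ⟨by simp, List.isChain_singleton e, ?_⟩
        intro a ha
        simp only [List.getLast?_singleton, Option.mem_some_iff] at ha
        subst ha
        exact ⟨hGT.1.resolve_left hG, hGT.2⟩

theorem PQrng_ok {H S G T : Set E.V} {x : PQE E} (hx : E.PQEok H S G T x) :
    E.PQVok H S G T (E.PQrng x) := by
  cases x with
  | old e => exact Or.inl hx.1
  | pr e => exact hx
  | fp es =>
    cases es with
    | nil =>
      rcases hx with h1 | h2
      · exact absurd rfl h1.1
      · exact absurd rfl h2.1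
    | cons e es' =>
      cases es' with
      | nil =>
        rcases hx with h1 | h2
        · have := h1.2.2 e (by simp [List.getLast?_singleton])
          exact Or.inl this.1
        · have := h2.2.2 e (by simp [List.getLast?_singleton])
          exact Or.inr this
      | cons f q =>
        show (f :: q) ∈ E.F1 H S G T ∪ E.F2 S T
        rcases hx with h1 | h2
        · refine Or.inl ⟨by simp, h1.2.1.tail, ?_⟩
          intro a ha
          exact h1.2.2 a (by rw [List.getLast?_cons_cons]; exact ha)
        · refine Or.inr ⟨by simp, h2.2.1.tail, ?_⟩
          intro a ha
          exact h2.2.2 a (by rw [List.getLast?_cons_cons]; exact ha)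

/-- The porcupine-quotient graph `(G,T)/(H,S)`. -/
noncomputable def PQ (H S G T : Set E.V) : DGraph where
  V := {x : PQV E // E.PQVok H S G T x}
  Ed := {x : PQE E // E.PQEok H S G T x}
  s := fun e => ⟨E.PQsrc H S G T e.1, E.PQsrc_ok e.2⟩
  r := fun e => ⟨E.PQrng e.1, E.PQrng_ok e.2⟩

/-- The order on admissible pairs: `(H,S) ≤ (G,T)` iff `H ⊆ G` and `S ⊆ G ∪ T`. -/
def pairLE {α : Type} (p q : Set α × Set α) : Prop := p.1 ⊆ q.1 ∧ p.2 ⊆ q.1 ∪ q.2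

/-- Strict order on admissible pairs. -/
def pairLT {α : Type} (p q : Set α × Set α) : Prop := pairLE p q ∧ p ≠ q

/-- `E` has a composition series: a finite chain of admissible pairs from `(∅,∅)`
to `(E⁰,∅)` whose consecutive porcupine-quotients are cofinal. -/
def HasCompSeries : Prop :=
  ∃ (n : ℕ) (c : ℕ → Set E.V × Set E.V),
    c 0 = (∅, ∅) ∧ c n = (Set.univ, ∅) ∧
    (∀ i, i ≤ n → E.Admissible (c i).1 (c i).2) ∧
    (∀ i, i < n → pairLT (c i) (c (i + 1))) ∧
    (∀ i, i < n → (E.PQ (c i).1 (c i).2 (c (i + 1)).1 (c (i + 1)).2).Cofinal)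

end DGraph

/-!
Admissible pairs, ordered by `pairLE`, form a modular lattice: the meet is taken componentwise, the
join is a hereditary saturated closure, and comparable pairs with equal meets and joins with a third
pair coincide. If `(H,S) < (K,R) < (G,T)`, the quotient `(G,T)/(H,S)` is not cofinal: according to
whether `H ≠ K` or `S ≠ R`, one finds a vertex of the quotient and an element of its `E^{≤∞}` (a
sink, an infinite emitter or an infinite path) that the vertex cannot reach. Hence a composition
series is a finite chain of coverings from `⊥` to `⊤`, and in a modular lattice such a chain rules
out infinite strictly monotone sequences.
-/

section CovByChain

theorem IsModularLattice.of_inf_sup_cancel {α : Type*} [Lattice α]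
    (h : ∀ x y a : α, x ≤ y → x ⊓ a = y ⊓ a → x ⊔ a = y ⊔ a → x = y) :
    IsModularLattice α where
  sup_inf_le_assoc_of_le {x} y {z} hxz := by
    have hle : x ⊔ y ⊓ z ≤ (x ⊔ y) ⊓ z :=
      sup_le (le_inf le_sup_left hxz) (inf_le_inf_right _ le_sup_right)
    refine (h _ _ y hle (le_antisymm (inf_le_inf_right y hle) ?_)
      (le_antisymm (sup_le_sup_right hle y) ?_)).ge
    · calc (x ⊔ y) ⊓ z ⊓ y ≤ y ⊓ z := le_inf inf_le_right (inf_le_left.trans inf_le_right)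
        _ ≤ (x ⊔ y ⊓ z) ⊓ y := le_inf le_sup_right inf_le_left
    · calc (x ⊔ y) ⊓ z ⊔ y ≤ x ⊔ y := sup_le inf_le_left le_sup_right
        _ ≤ (x ⊔ y ⊓ z) ⊔ y := sup_le_sup_right le_sup_left y

theorem CovBy.monotone_stabilizes {α : Type*} [PartialOrder α] {a b : α}
    (hab : a ⋖ b) {f : ℕ → α} (hf : Monotone f) (hfab : ∀ k, f k ∈ Set.Icc a b) :
    ∃ k₀, ∀ k, k₀ ≤ k → f k = f k₀ := by
  by_cases htop : ∃ k₀, f k₀ = b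
  · obtain ⟨k₀, hk₀⟩ := htop
    exact ⟨k₀, fun k hk => le_antisymm (hk₀ ▸ (hfab k).2) (hf hk)⟩
  · push Not at htop
    have hbot : ∀ k, f k = a := fun k =>
      (hab.eq_or_eq (hfab k).1 (hfab k).2).resolve_right (htop k)
    exact ⟨0, fun k _ => (hbot k).trans (hbot 0).symm⟩

variable {α : Type*} [Lattice α] [IsModularLattice α]

/-- Joining with `d n` stabilises because `d n ⋖ d (n + 1)`; once it has, modularity makes
the meets with `d n` a strictly increasing sequence one step further down the chain. -/
theorem not_strictMono_of_covBy_chain {n : ℕ} {d : ℕ → α} (hcov : ∀ i < n, d i ⋖ d (i + 1))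
    {b : ℕ → α} (hb : StrictMono b) (hbd : ∀ k, b k ∈ Set.Icc (d 0) (d n)) : False := by
  induction n generalizing b with
  | zero => exact (hb zero_lt_one).not_ge ((hbd 1).2.trans (hbd 0).1)
  | succ n ih =>
    have hd : d 0 ≤ d n := by
      clear ih hbd
      induction n with
      | zero => rfl
      | succ i ihi => exact (ihi fun j hj => hcov j (by omega)).trans (hcov i (by omega)).le
    have hcovn := hcov n n.lt_succ_self
    obtain ⟨k₀, hk₀⟩ := hcovn.monotone_stabilizes (f := fun k => b k ⊔ d n)
      (fun k l hkl => sup_le_sup_right (hb.monotone hkl) _)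
      (fun k => ⟨le_sup_right, sup_le (hbd k).2 hcovn.le⟩)
    refine ih (fun i hi => hcov i (by omega)) (b := fun k => b (k + k₀) ⊓ d n) ?_
      (fun k => ⟨le_inf (hbd _).1 hd, inf_le_right⟩)
    refine strictMono_nat_of_lt_succ fun k => lt_of_le_of_ne
      (inf_le_inf_right _ (hb.monotone (by omega))) fun hinf => ?_
    have hsup : b (k + 1 + k₀) ⊔ d n = b (k + k₀) ⊔ d n :=
      (hk₀ _ (by omega)).trans (hk₀ _ (by omega)).symm
    exact (hb (by omega : k + k₀ < k + 1 + k₀)).ne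
      (eq_of_le_of_inf_le_of_sup_le (hb.monotone (by omega)) hinf.ge hsup.le)

theorem not_strictAnti_of_covBy_chain {n : ℕ} {d : ℕ → α} (hcov : ∀ i < n, d i ⋖ d (i + 1))
    {b : ℕ → α} (hb : StrictAnti b) (hbd : ∀ k, b k ∈ Set.Icc (d 0) (d n)) : False :=
  not_strictMono_of_covBy_chain (α := αᵒᵈ) (n := n) (d := fun i => OrderDual.toDual (d (n - i)))
    (fun i hi => by
      have h := hcov (n - (i + 1)) (by omega)
      rw [show n - (i + 1) + 1 = n - i by omega] at h
      exact toDual_covBy_toDual_iff.2 h)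
    hb.dual_right (fun k => by simpa using hbd k)

end CovByChain

namespace DGraph

section AdmissiblePairs

variable {E : DGraph}

theorem Hereditary.r_mem {W : Set E.V} (hW : E.Hereditary W) {e : E.Ed} (h : E.s e ∈ W) :
    E.r e ∈ W :=
  hW _ h _ (.single ⟨e, rfl, rfl⟩)

theorem Admissible.mem_fst_of_forall_r_mem {H S : Set E.V} (hHS : E.Admissible H S) {v : E.V}
    (hv : v ∈ H ∪ S) (hr : ∀ e, E.s e = v → E.r e ∈ H) : v ∈ H := by
  refine hv.resolve_right fun hvS => ?_
  obtain ⟨e, he, heH⟩ := (hHS.2.2 hvS).2.2.1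
  exact heH (hr e he)

theorem Admissible.finite_edges_not_mem {H S : Set E.V} (hHS : E.Admissible H S) {v : E.V}
    (hv : v ∈ H ∪ S) : {e | E.s e = v ∧ E.r e ∉ H}.Finite := by
  rcases hv with hv | hv
  · exact Set.finite_empty.subset fun e ⟨he, heH⟩ => heH (hHS.1.r_mem (he ▸ hv))
  · exact (hHS.2.2 hv).2.2.2

theorem mem_breaking_of_subset {H J : Set E.V} {v : E.V} (hv : v ∈ E.breaking H) (hHJ : H ⊆ J)
    (hvJ : v ∉ J) (hexit : ∃ e, E.s e = v ∧ E.r e ∉ J) : v ∈ E.breaking J :=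
  ⟨hvJ, hv.2.1, hexit, hv.2.2.2.subset fun _ he => ⟨he.1, fun h => he.2 (hHJ h)⟩⟩

theorem mem_breaking_inter {H K : Set E.V} {v : E.V} (hv : v ∈ E.breaking H)
    (hK : {e | E.s e = v ∧ E.r e ∉ K}.Finite) : v ∈ E.breaking (H ∩ K) := by
  obtain ⟨hvH, hinf, ⟨e, he, heH⟩, hfin⟩ := hv
  refine ⟨fun h => hvH h.1, hinf, ⟨e, he, fun h => heH h.1⟩, (hfin.union hK).subset ?_⟩
  rintro e ⟨he, heHK⟩
  by_cases heH : E.r e ∈ H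
  · exact Or.inr ⟨he, fun heK => heHK ⟨heH, heK⟩⟩
  · exact Or.inl ⟨he, heH⟩

theorem pairLE_refl {α : Type} (p : Set α × Set α) : pairLE p p :=
  ⟨subset_rfl, fun _ hx => Or.inr hx⟩

theorem pairLE_trans {α : Type} {p q r : Set α × Set α} (hpq : pairLE p q) (hqr : pairLE q r) :
    pairLE p r :=
  ⟨hpq.1.trans hqr.1, fun _ hx => (hpq.2 hx).elim (fun h => Or.inl (hqr.1 h)) (hqr.2 ·)⟩

theorem pairLE_antisymm {p q : Set E.V × Set E.V} (hp : E.Admissible p.1 p.2)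
    (hq : E.Admissible q.1 q.2) (hpq : pairLE p q) (hqp : pairLE q p) : p = q := by
  have hfst : p.1 = q.1 := hpq.1.antisymm hqp.1
  refine Prod.ext hfst (Set.Subset.antisymm (fun v hv => ?_) fun v hv => ?_)
  · exact (hpq.2 hv).resolve_left fun h => (hp.2.2 hv).1 (hfst ▸ h)
  · exact (hqp.2 hv).resolve_left fun h => (hq.2.2 hv).1 (hfst ▸ h)

/-- The vertices of the second component are automatically breaking vertices of `p.1 ∩ q.1`
(`meetP_admissible`); the same holds for `joinP`. -/
def meetP {α : Type} (p q : Set α × Set α) : Set α × Set α :=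
  (p.1 ∩ q.1, ((p.1 ∪ p.2) ∩ (q.1 ∪ q.2)) \ (p.1 ∩ q.1))

theorem meetP_admissible {p q : Set E.V × Set E.V} (hp : E.Admissible p.1 p.2)
    (hq : E.Admissible q.1 q.2) : E.Admissible (meetP p q).1 (meetP p q).2 := by
  refine ⟨fun u hu v huv => ⟨hp.1 u hu.1 v huv, hq.1 u hu.2 v huv⟩,
    fun v hreg hr => ⟨hp.2.1 v hreg fun e he => (hr e he).1, hq.2.1 v hreg fun e he => (hr e he).2⟩,
    fun v ⟨⟨hvp, hvq⟩, hv⟩ => ?_⟩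
  by_cases hvp1 : v ∈ p.1
  · have hvq2 : v ∈ q.2 := hvq.resolve_left fun h => hv ⟨hvp1, h⟩
    show v ∈ E.breaking (p.1 ∩ q.1)
    rw [Set.inter_comm]
    exact mem_breaking_inter (hq.2.2 hvq2) (hp.finite_edges_not_mem hvp)
  · exact mem_breaking_inter (hp.2.2 (hvp.resolve_left hvp1)) (hq.finite_edges_not_mem hvq)

theorem meetP_le_left {α : Type} (p q : Set α × Set α) : pairLE (meetP p q) p :=
  ⟨Set.inter_subset_left, fun _ hv => hv.1.1⟩

theorem meetP_le_right {α : Type} (p q : Set α × Set α) : pairLE (meetP p q) q :=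
  ⟨Set.inter_subset_right, fun _ hv => hv.1.2⟩

theorem le_meetP {α : Type} {p q r : Set α × Set α} (hrp : pairLE r p) (hrq : pairLE r q) :
    pairLE r (meetP p q) := by
  refine ⟨fun v hv => ⟨hrp.1 hv, hrq.1 hv⟩, fun v hv => ?_⟩
  by_cases hvpq : v ∈ p.1 ∩ q.1
  · exact Or.inl hvpq
  · exact Or.inr ⟨⟨hrp.2 hv, hrq.2 hv⟩, hvpq⟩

inductive JoinClosure (E : DGraph) (p q : Set E.V × Set E.V) : E.V → Prop
  | left {v : E.V} : v ∈ p.1 → JoinClosure E p q v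
  | right {v : E.V} : v ∈ q.1 → JoinClosure E p q v
  | step (e : E.Ed) : JoinClosure E p q (E.s e) → JoinClosure E p q (E.r e)
  | sat {v : E.V} : E.IsRegular v → (∀ e, E.s e = v → JoinClosure E p q (E.r e)) →
      JoinClosure E p q v
  | brk {v : E.V} : v ∈ p.2 ∪ q.2 → (∀ e, E.s e = v → JoinClosure E p q (E.r e)) →
      JoinClosure E p q v

def joinP (E : DGraph) (p q : Set E.V × Set E.V) : Set E.V × Set E.V :=
  ({v | JoinClosure E p q v}, (p.2 ∪ q.2) \ {v | JoinClosure E p q v})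

theorem joinP_admissible {p q : Set E.V × Set E.V} (hp : E.Admissible p.1 p.2)
    (hq : E.Admissible q.1 q.2) : E.Admissible (E.joinP p q).1 (E.joinP p q).2 := by
  refine ⟨fun u hu v huv => ?_, fun v hreg hr => .sat hreg hr, fun v ⟨hv, hvJ⟩ => ?_⟩
  · induction huv with
    | refl => exact hu
    | tail _ hbc ih => obtain ⟨e, rfl, rfl⟩ := hbc; exact JoinClosure.step e ih
  · have hexit : ∃ e, E.s e = v ∧ E.r e ∉ {v | JoinClosure E p q v} := by
      by_contra! h
      exact hvJ (.brk hv h)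
    rcases hv with hv | hv
    · exact mem_breaking_of_subset (hp.2.2 hv) (fun _ => .left) hvJ hexit
    · exact mem_breaking_of_subset (hq.2.2 hv) (fun _ => .right) hvJ hexit

theorem le_joinP_left (p q : Set E.V × Set E.V) : pairLE p (E.joinP p q) := by
  refine ⟨fun _ => .left, fun v hv => ?_⟩
  by_cases hvJ : JoinClosure E p q v
  · exact Or.inl hvJ
  · exact Or.inr ⟨Or.inl hv, hvJ⟩

theorem le_joinP_right (p q : Set E.V × Set E.V) : pairLE q (E.joinP p q) := by
  refine ⟨fun _ => .right, fun v hv => ?_⟩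
  by_cases hvJ : JoinClosure E p q v
  · exact Or.inl hvJ
  · exact Or.inr ⟨Or.inr hv, hvJ⟩

theorem joinP_le {p q r : Set E.V × Set E.V} (hr : E.Admissible r.1 r.2) (hpr : pairLE p r)
    (hqr : pairLE q r) : pairLE (E.joinP p q) r := by
  refine ⟨fun v hv => ?_, fun v hv => hv.1.elim (hpr.2 ·) (hqr.2 ·)⟩
  induction hv with
  | left h => exact hpr.1 h
  | right h => exact hqr.1 h
  | step e _ ih => exact hr.1.r_mem ih
  | sat hreg _ ih => exact hr.2.1 _ hreg ih
  | brk hv _ ih => exact hr.mem_fst_of_forall_r_mem (hv.elim (hpr.2 ·) (hqr.2 ·)) ih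

section Cancel

variable {x y a : Set E.V × Set E.V}

theorem JoinClosure.reaches_mem_fst (hx : E.Admissible x.1 x.2) (hy : E.Admissible y.1 y.2)
    (ha : E.Admissible a.1 a.2) (hm : meetP x a = meetP y a) {v : E.V}
    (hv : JoinClosure E x a v) : ∀ z, E.Reaches v z → z ∈ y.1 → z ∈ x.1 := by
  induction hv with
  | left h => exact fun z hz _ => hx.1 _ h _ hz
  | right h =>
    intro z hz hzy
    have hz : z ∈ (meetP y a).1 := ⟨hzy, ha.1 _ h _ hz⟩
    exact (hm ▸ hz).1
  | step e _ ih => exact fun z hz => ih z (.head ⟨e, rfl, rfl⟩ hz)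
  | sat hreg _ ih =>
    intro z hz hzy
    obtain rfl | ⟨b, ⟨e, he, rfl⟩, hbz⟩ := hz.cases_head
    · exact hx.2.1 _ hreg fun e he => ih e he _ .refl (hy.1.r_mem (he ▸ hzy))
    · exact ih e he _ hbz hzy
  | brk hw _ ih =>
    intro z hz hzy
    obtain rfl | ⟨b, ⟨e, he, rfl⟩, hbz⟩ := hz.cases_head
    · refine hx.mem_fst_of_forall_r_mem ?_ fun e he => ih e he _ .refl (hy.1.r_mem (he ▸ hzy))
      refine hw.elim Or.inr fun hwa => ?_
      have hw : _ ∈ (meetP y a).2 := ⟨⟨Or.inl hzy, Or.inr hwa⟩, fun h => (ha.2.2 hwa).1 h.2⟩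
      exact (hm ▸ hw).1.1
    · exact ih e he _ hbz hzy

theorem JoinClosure.reaches_mem_snd (hx : E.Admissible x.1 x.2) (hy : E.Admissible y.1 y.2)
    (ha : E.Admissible a.1 a.2) (hm : meetP x a = meetP y a) {v : E.V}
    (hv : JoinClosure E x a v) : ∀ z, E.Reaches v z → z ∈ y.2 → z ∈ x.1 ∪ x.2 := by
  have hya : ∀ z ∈ y.2, z ∈ a.1 ∪ a.2 → z ∈ x.1 ∪ x.2 := fun z hzy hza =>
    have hz : z ∈ (meetP y a).2 := ⟨⟨Or.inr hzy, hza⟩, fun h => (hy.2.2 hzy).1 h.1⟩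
    (hm ▸ hz).1.1
  induction hv with
  | left h => exact fun z hz _ => Or.inl (hx.1 _ h _ hz)
  | right h => exact fun z hz hzy => hya z hzy (Or.inl (ha.1 _ h _ hz))
  | step e _ ih => exact fun z hz => ih z (.head ⟨e, rfl, rfl⟩ hz)
  | sat hreg _ ih =>
    intro z hz hzy
    obtain rfl | ⟨b, ⟨e, he, rfl⟩, hbz⟩ := hz.cases_head
    · exact absurd hreg.2 (hy.2.2 hzy).2.1
    · exact ih e he _ hbz hzy
  | brk hw _ ih =>
    intro z hz hzy
    obtain rfl | ⟨b, ⟨e, he, rfl⟩, hbz⟩ := hz.cases_head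
    · exact hw.elim Or.inr fun hwa => hya _ hzy (Or.inr hwa)
    · exact ih e he _ hbz hzy

theorem eq_of_pairLE_of_meetP_eq_of_joinP_eq (hx : E.Admissible x.1 x.2)
    (hy : E.Admissible y.1 y.2) (ha : E.Admissible a.1 a.2) (hxy : pairLE x y)
    (hm : meetP x a = meetP y a) (hj : E.joinP x a = E.joinP y a) : x = y := by
  refine pairLE_antisymm hx hy hxy ⟨fun v hv => ?_, fun v hv => ?_⟩
  · have hvJ : JoinClosure E x a v := by
      have := (le_joinP_left y a).1 hv
      rwa [← hj] at this
    exact hvJ.reaches_mem_fst hx hy ha hm v .refl hv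
  · have hvJ := (le_joinP_left y a).2 hv
    rw [← hj] at hvJ
    rcases hvJ with hvJ | ⟨hvxa, -⟩
    · exact JoinClosure.reaches_mem_snd hx hy ha hm hvJ v .refl hv
    · refine hvxa.elim Or.inr fun hva => ?_
      have hv : v ∈ (meetP y a).2 := ⟨⟨Or.inr hv, Or.inr hva⟩, fun h => (hy.2.2 hv).1 h.1⟩
      exact (hm ▸ hv).1.1

end Cancel

def AdmPair (E : DGraph) : Type := {p : Set E.V × Set E.V // E.Admissible p.1 p.2}

namespace AdmPair

instance : PartialOrder E.AdmPair where
  le a b := pairLE a.1 b.1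
  le_refl a := pairLE_refl a.1
  le_trans _ _ _ := pairLE_trans
  le_antisymm a b hab hba := Subtype.ext (pairLE_antisymm a.2 b.2 hab hba)

theorem lt_iff_pairLT {a b : E.AdmPair} : a < b ↔ pairLT a.1 b.1 :=
  lt_iff_le_and_ne.trans (and_congr_right' (not_congr Subtype.ext_iff))

instance : Lattice E.AdmPair where
  inf a b := ⟨meetP a.1 b.1, meetP_admissible a.2 b.2⟩
  inf_le_left a b := meetP_le_left a.1 b.1
  inf_le_right a b := meetP_le_right a.1 b.1
  le_inf _ _ _ := le_meetP
  sup a b := ⟨E.joinP a.1 b.1, joinP_admissible a.2 b.2⟩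
  le_sup_left a b := le_joinP_left a.1 b.1
  le_sup_right a b := le_joinP_right a.1 b.1
  sup_le _ _ c := joinP_le c.2

instance : IsModularLattice E.AdmPair :=
  .of_inf_sup_cancel fun x y a hxy hm hj => Subtype.ext <|
    eq_of_pairLE_of_meetP_eq_of_joinP_eq x.2 y.2 a.2 hxy (congrArg Subtype.val hm)
      (congrArg Subtype.val hj)

instance : BoundedOrder E.AdmPair where
  bot := ⟨(∅, ∅), fun _ h => h.elim, fun _ hreg hr => hr _ hreg.1.some_mem, Set.empty_subset _⟩
  bot_le _ := ⟨Set.empty_subset _, Set.empty_subset _⟩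
  top := ⟨(Set.univ, ∅), fun _ _ _ _ => trivial, fun _ _ _ => trivial, Set.empty_subset _⟩
  le_top _ := ⟨Set.subset_univ _, fun _ _ => Or.inl trivial⟩

end AdmPair

end AdmissiblePairs

section Cofinal

variable {F : DGraph}

theorem not_isRegular_of_isSink {y : F.V} (hy : F.IsSink y) : ¬ F.IsRegular y :=
  fun hreg => hreg.1.ne_empty hy

theorem reaches_eq_of_isSink {y z : F.V} (hy : F.IsSink y) (h : F.Reaches y z) : z = y := by
  obtain rfl | ⟨b, ⟨e, he, -⟩, -⟩ := h.cases_head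
  · rfl
  · exact (Set.eq_empty_iff_forall_notMem.1 hy e he).elim

theorem gmem_fin_nil {y : F.V} (hy : ¬ F.IsRegular y) : F.gmem (.fin y []) :=
  ⟨⟨List.isChain_nil, by simp⟩, (not_and_or.1 hy).imp Set.not_nonempty_iff_eq_empty.1 id⟩

/-- If all vertices of `A` are regular, the escaping edges trace an infinite path inside `A`;
otherwise `A` contains a sink or an infinite emitter. Either is an element of `E^{≤∞}`. -/
theorem Cofinal.exists_reaches_mem (hF : F.Cofinal) {A : Set F.V} (hA : A.Nonempty)
    (hesc : ∀ y ∈ A, F.IsRegular y → ∃ e, F.s e = y ∧ F.r e ∈ A) (x : F.V) :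
    ∃ w ∈ A, F.Reaches x w := by
  by_cases hreg : ∀ y ∈ A, F.IsRegular y
  · obtain ⟨y₀, hy₀⟩ := hA
    have : Nonempty F.Ed := ⟨(hreg y₀ hy₀).1.some⟩
    choose! next hnext using fun y hy => hesc y hy (hreg y hy)
    let g : ℕ → F.V := fun n => (fun y => F.r (next y))^[n] y₀
    have hg : ∀ n, g (n + 1) = F.r (next (g n)) := fun n => Function.iterate_succ_apply' _ n y₀
    have hgA : ∀ n, g n ∈ A := fun n => by
      induction n with
      | zero => exact hy₀
      | succ n ih => exact hg n ▸ (hnext _ ih).2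
    have hpath : F.IsInfPath (next ∘ g) := fun n => by
      rw [Function.comp_apply, Function.comp_apply, (hnext _ (hgA (n + 1))).1, hg]
    obtain ⟨_, ⟨n, rfl⟩, hxw⟩ := hF x (.inf (next ∘ g)) hpath
    refine ⟨_, ?_, hxw⟩
    simpa only [Function.comp_apply, (hnext _ (hgA n)).1] using hgA n
  · push Not at hreg
    obtain ⟨y, hyA, hy⟩ := hreg
    obtain ⟨w, hw, hxw⟩ := hF x (.fin y []) (gmem_fin_nil hy)
    obtain rfl : w = y := by simpa [gverts, walkVerts] using hw
    exact ⟨w, hyA, hxw⟩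

theorem Cofinal.reaches_of_not_isRegular (hF : F.Cofinal) {y : F.V} (hy : ¬ F.IsRegular y)
    (x : F.V) : F.Reaches x y := by
  obtain ⟨w, rfl, hxw⟩ := hF.exists_reaches_mem ⟨y, rfl⟩ (fun z hz hreg => (hy (hz ▸ hreg)).elim) x
  exact hxw

/-- Nothing can escape from a sink `z`, so the escape argument must get stuck at a vertex
all of whose edges end at `z`. -/
theorem Cofinal.exists_forall_r_eq_of_isSink (hF : F.Cofinal) {z : F.V} (hz : F.IsSink z)
    {y₀ : F.V} (hy₀ : y₀ ≠ z) : ∃ y, (∃ e, F.s e = y) ∧ ∀ e, F.s e = y → F.r e = z := by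
  by_contra! h
  obtain ⟨w, hwz, hzw⟩ := hF.exists_reaches_mem (A := {y | y ≠ z}) ⟨y₀, hy₀⟩
    (fun y _ hreg => h y hreg.1) z
  exact hwz (reaches_eq_of_isSink hz hzw)

end Cofinal

/-- `x.Over W`: `x` is a vertex `v` or `v'` of a porcupine-quotient with `v ∈ W`. -/
def PQV.Over {E : DGraph} (W : Set E.V) : E.PQV → Prop
  | .old u => u ∈ W
  | .wp _ => False
  | .pr u => u ∈ W

namespace PQ

variable {E : DGraph} {H S G T : Set E.V}

theorem over_of_reaches {W : Set E.V} (hW : E.Hereditary W) {x y : (E.PQ H S G T).V}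
    (hx : x.1.Over W) (hxy : (E.PQ H S G T).Reaches x y) : y.1.Over W := by
  induction hxy with
  | refl => exact hx
  | tail _ hbc ih =>
    obtain ⟨⟨e, he⟩, rfl, rfl⟩ := hbc
    cases e with
    | old e => exact hW.r_mem ih
    | fp es => exact ih.elim
    | pr e =>
      change (E.PQsrc H S G T (.pr e)).Over W at ih
      simp only [PQsrc] at ih
      split_ifs at ih
      exacts [hW.r_mem ih, ih.elim]

theorem isSink_pr {v : E.V} (hv : E.PQVok H S G T (.pr v)) :
    (E.PQ H S G T).IsSink ⟨.pr v, hv⟩ := by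
  refine Set.eq_empty_iff_forall_notMem.2 fun ⟨e, he⟩ hs => ?_
  have hs : E.PQsrc H S G T e = .pr v := congrArg Subtype.val hs
  cases e with
  | old e => cases hs
  | fp es => cases hs
  | pr e =>
    simp only [PQsrc] at hs
    split_ifs at hs

theorem eq_old_or_eq_pr_of_s_eq_old {w : E.V} {e : (E.PQ H S G T).Ed}
    (he : ((E.PQ H S G T).s e).1 = .old w) :
    (∃ e', e.1 = .old e' ∧ E.s e' = w ∧ E.r e' ∈ G \ H) ∨
      (∃ e', e.1 = .pr e' ∧ E.s e' = w ∧ E.r e' ∈ ((G ∪ T) \ S) ∩ E.BHG H G) := by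
  obtain ⟨e, hok⟩ := e
  change E.PQsrc H S G T e = .old w at he
  cases e with
  | old e => cases he; exact Or.inl ⟨e, rfl, rfl, hok.1⟩
  | fp es => cases he
  | pr e =>
    simp only [PQsrc] at he
    split_ifs at he
    cases he
    exact Or.inr ⟨e, rfl, rfl, hok⟩

theorem exists_old_edge {w : E.V} (hw : E.PQVok H S G T (.old w)) {e' : E.Ed}
    (hs : E.s e' = w) (hr : E.r e' ∈ G \ H) :
    ∃ e, (E.PQ H S G T).s e = ⟨.old w, hw⟩ ∧ ((E.PQ H S G T).r e).1 = .old (E.r e') :=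
  ⟨⟨.old e', hr, hs ▸ hw⟩, Subtype.ext (congrArg PQV.old hs), rfl⟩

theorem isSink_old {w : E.V} (hw : E.PQVok H S G T (.old w))
    (hGH : ∀ e, E.s e = w → E.r e ∉ G \ H)
    (hpr : ∀ e, E.s e = w → E.r e ∉ ((G ∪ T) \ S) ∩ E.BHG H G) :
    (E.PQ H S G T).IsSink ⟨.old w, hw⟩ := by
  refine Set.eq_empty_iff_forall_notMem.2 fun e he => ?_
  rcases eq_old_or_eq_pr_of_s_eq_old (congrArg Subtype.val he) with
    ⟨e', -, hs, hr⟩ | ⟨e', -, hs, hr⟩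
  exacts [hGH e' hs hr, hpr e' hs hr]

theorem finite_of_isRegular_old {w : E.V} {hw : E.PQVok H S G T (.old w)}
    (hreg : (E.PQ H S G T).IsRegular ⟨.old w, hw⟩) :
    {e' | E.s e' = w ∧ E.r e' ∈ G \ H}.Finite := by
  refine ((hreg.2.image Subtype.val).preimage
    (fun _ _ _ _ h => PQE.old.inj h)).subset fun e' ⟨hs, hr⟩ => ?_
  exact ⟨⟨.old e', hr, hs ▸ hw⟩, Subtype.ext (congrArg PQV.old hs), rfl⟩

theorem not_mem_of_forall_r_eq_pr {v : E.V} {y : (E.PQ H S G T).V}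
    (hy : ∃ e, (E.PQ H S G T).s e = y)
    (hall : ∀ e, (E.PQ H S G T).s e = y → ((E.PQ H S G T).r e).1 = .pr v) : v ∉ G := by
  intro hvG
  obtain ⟨y, hyok⟩ := y
  obtain ⟨e, he⟩ := hy
  cases y with
  | old u =>
    rcases eq_old_or_eq_pr_of_s_eq_old (congrArg Subtype.val he) with
      ⟨e', he', -, -⟩ | ⟨e', he', hs, hr⟩
    · have h := hall e he
      rw [show ((E.PQ H S G T).r e).1 = E.PQrng e.1 from rfl, he'] at h
      cases h
    · have h := hall e he
      rw [show ((E.PQ H S G T).r e).1 = E.PQrng e.1 from rfl, he'] at h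
      cases h
      obtain ⟨e'', he'', hr''⟩ := exists_old_edge hyok hs ⟨hvG, hr.2.1⟩
      cases (hall e'' he'').symm.trans hr''
  | wp es =>
    have h := hall ⟨.fp es, hyok⟩ rfl
    rcases es with _ | ⟨_, _ | _⟩ <;> cases h
  | pr u => exact Set.eq_empty_iff_forall_notMem.1 (isSink_pr hyok) e he

end PQ

section Quotient

variable {E : DGraph} {H S K R G T : Set E.V}

theorem exists_mem_diff_of_pairLT (hS : S ⊆ E.breaking H) (hlt : pairLT (H, S) (K, R)) :
    (∃ u ∈ K, u ∉ H) ∨ (H = K ∧ ∃ v ∈ R, v ∉ S) := by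
  by_cases hKH : K ⊆ H
  · have hHK : H = K := hlt.1.1.antisymm hKH
    subst hHK
    refine Or.inr ⟨rfl, Set.not_subset.1 fun hRS => hlt.2 (Prod.ext rfl ?_)⟩
    exact Set.Subset.antisymm (fun v hv => (hlt.1.2 hv).resolve_left (hS hv).1) hRS
  · exact Or.inl (Set.not_subset.1 hKH)

namespace PQ

theorem exists_edge_of_isRegular_old (hKR : E.Admissible K R) (hGT : E.Admissible G T)
    (hHK : H ⊆ K) (hSK : S ⊆ K ∪ R) (hKG : K ⊆ G) (hprK : ((G ∪ T) \ S) ∩ E.BHG H G ⊆ K)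
    {w : E.V} (hw : E.PQVok H S G T (.old w)) (hwK : w ∉ K)
    (hreg : (E.PQ H S G T).IsRegular ⟨.old w, hw⟩) :
    ∃ e, E.s e = w ∧ E.r e ∈ G \ H ∧ E.r e ∉ K := by
  by_contra! hK
  obtain ⟨e₁, he₁, hr₁⟩ : ∃ e₁, E.s e₁ = w ∧ E.r e₁ ∈ G \ H := by
    obtain ⟨e, he⟩ := hreg.1
    rcases eq_old_or_eq_pr_of_s_eq_old (congrArg Subtype.val he) with
      ⟨e', -, hs, hr⟩ | ⟨e', -, hs, hr⟩
    exacts [⟨e', hs, hr⟩, ⟨e', hs, hKG (hprK hr), hr.2.1⟩]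
  have hBHG : E.IsInfEmitter w → w ∈ E.BHG H G := fun hinf =>
    ⟨fun h => hwK (hHK h), hinf, ⟨e₁, he₁, hr₁⟩, finite_of_isRegular_old hreg⟩
  rcases hw with ⟨hwG, -⟩ | ⟨hwT, hwS⟩
  · have hall : ∀ e, E.s e = w → E.r e ∈ K := fun e he =>
      (em (E.r e ∈ H)).elim (hHK ·) fun hrH => hK e he ⟨hGT.1.r_mem (he ▸ hwG), hrH⟩
    have hinf : E.IsInfEmitter w := fun hfin => hwK (hKR.2.1 w ⟨⟨e₁, he₁⟩, hfin⟩ hall)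
    have hwS : w ∉ S := fun h => hwK (hKR.mem_fst_of_forall_r_mem (hSK h) hall)
    exact hwK (hprK ⟨⟨Or.inl hwG, hwS⟩, hBHG hinf⟩)
  · exact hwK (hprK ⟨⟨Or.inr hwT, hwS⟩, hBHG (hGT.2.2 hwT).2.1⟩)

theorem not_cofinal_of_mem_fst_diff (hKR : E.Admissible K R) (hGT : E.Admissible G T)
    (hHSKR : pairLE (H, S) (K, R)) (hKRGT : pairLT (K, R) (G, T)) {u₀ : E.V} (hu₀K : u₀ ∈ K)
    (hu₀H : u₀ ∉ H) : ¬ (E.PQ H S G T).Cofinal := by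
  intro hcof
  have hKG : K ⊆ G := hKRGT.1.1
  let x : (E.PQ H S G T).V := ⟨.old u₀, Or.inl ⟨hKG hu₀K, hu₀H⟩⟩
  have hx : x.1.Over K := hu₀K
  -- from `x` only vertices over `K` can be reached, and some element of `E^{≤∞}` avoids them
  by_cases hprK : ((G ∪ T) \ S) ∩ E.BHG H G ⊆ K
  · obtain ⟨w, hwK, hw⟩ : ∃ w ∉ K, E.PQVok H S G T (.old w) := by
      rcases exists_mem_diff_of_pairLT hKR.2.2 hKRGT with ⟨w, hwG, hwK⟩ | ⟨-, w, hwT, hwR⟩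
      · exact ⟨w, hwK, Or.inl ⟨hwG, fun h => hwK (hHSKR.1 h)⟩⟩
      · have hwK : w ∉ K := fun h => (hGT.2.2 hwT).1 (hKG h)
        exact ⟨w, hwK, Or.inr ⟨hwT, fun h => (hHSKR.2 h).elim hwK hwR⟩⟩
    obtain ⟨y, ⟨w', hw'K, hy⟩, hxy⟩ := hcof.exists_reaches_mem
      (A := {y | ∃ w ∉ K, y.1 = .old w}) ⟨⟨.old w, hw⟩, w, hwK, rfl⟩
      (fun ⟨_, hy⟩ ⟨w, hwK, hyw⟩ hreg => by
        subst hyw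
        obtain ⟨e', hs, hrGH, hrK⟩ := exists_edge_of_isRegular_old hKR hGT hHSKR.1 hHSKR.2 hKG
          hprK hy hwK hreg
        obtain ⟨e, hes, her⟩ := exists_old_edge hy hs hrGH
        exact ⟨e, hes, E.r e', hrK, her⟩) x
    have hy' := over_of_reaches hKR.1 hx hxy
    rw [hy] at hy'
    exact hw'K hy'
  · obtain ⟨w, hw, hwK⟩ := Set.not_subset.1 hprK
    exact hwK (over_of_reaches hKR.1 hx
      (hcof.reaches_of_not_isRegular (not_isRegular_of_isSink (isSink_pr hw)) x))

theorem not_cofinal_of_breaking_of_edge (hG : E.Hereditary G) {v₀ : E.V}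
    (hv₀ : v₀ ∈ E.breaking H) (hv₀GT : v₀ ∈ G ∪ T) (hv₀S : v₀ ∉ S) {e₁ : E.Ed}
    (he₁ : E.s e₁ = v₀) (hr₁ : E.r e₁ ∈ G \ H) : ¬ (E.PQ H S G T).Cofinal := by
  intro hcof
  have hpr : E.PQVok H S G T (.pr v₀) := ⟨⟨hv₀GT, hv₀S⟩, hv₀.1, hv₀.2.1, ⟨e₁, he₁, hr₁⟩,
    hv₀.2.2.2.subset fun _ he => ⟨he.1, he.2.2⟩⟩
  let x : (E.PQ H S G T).V := ⟨.old (E.r e₁), Or.inl hr₁⟩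
  -- some vertex has all its edges ending at the sink `v₀'`, which rules out `v₀ ∈ G`;
  -- yet `v₀'` is reached from `x`, which lies over `G`
  have hv₀G : v₀ ∉ G := by
    obtain ⟨y, hy, hyz⟩ := hcof.exists_forall_r_eq_of_isSink (isSink_pr hpr) (y₀ := x)
      fun h => by cases congrArg Subtype.val h
    exact not_mem_of_forall_r_eq_pr hy fun e he => congrArg Subtype.val (hyz e he)
  exact hv₀G (over_of_reaches (x := x) hG hr₁.1
    (hcof.reaches_of_not_isRegular (not_isRegular_of_isSink (isSink_pr hpr)) x))

theorem not_cofinal_of_breaking_of_not_edge (hG : E.Hereditary G) {v₀ : E.V}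
    (hv₀ : v₀ ∈ E.breaking H) (hv₀GT : v₀ ∈ G ∪ T) (hv₀S : v₀ ∉ S)
    (hno : ∀ e, E.s e = v₀ → E.r e ∉ G \ H) {g₀ : E.V} (hg₀ : g₀ ∈ G \ H) :
    ¬ (E.PQ H S G T).Cofinal := by
  intro hcof
  let x : (E.PQ H S G T).V := ⟨.old g₀, Or.inl hg₀⟩
  have hreach {y : (E.PQ H S G T).V} (hy : ¬ (E.PQ H S G T).IsRegular y) : y.1.Over G :=
    over_of_reaches (x := x) hG hg₀.1 (hcof.reaches_of_not_isRegular hy x)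
  have hv₀G : v₀ ∉ G := fun h => by
    obtain ⟨e, he, heH⟩ := hv₀.2.2.1
    exact hno e he ⟨hG.r_mem (he ▸ h), heH⟩
  -- the sink `r(e)'` for an edge `e` out of `v₀`, or else `v₀` itself, lies outside `G`
  by_cases hpr : ∃ e, E.s e = v₀ ∧ E.r e ∈ ((G ∪ T) \ S) ∩ E.BHG H G
  · obtain ⟨e, he, hr⟩ := hpr
    exact hno e he ⟨hreach (not_isRegular_of_isSink (isSink_pr hr)), hr.2.1⟩
  · push Not at hpr
    have hv₀ok : E.PQVok H S G T (.old v₀) := Or.inr ⟨hv₀GT.resolve_left hv₀G, hv₀S⟩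
    exact hv₀G (hreach (not_isRegular_of_isSink (isSink_old hv₀ok hno hpr)))

theorem not_cofinal_of_subset_of_ne (hGH : G ⊆ H) {v w : E.V} (hv : v ∈ T \ S) (hw : w ∈ T \ S)
    (hvw : v ≠ w) : ¬ (E.PQ H S G T).Cofinal := by
  intro hcof
  have hsink {u : E.V} (hu : u ∈ T \ S) : (E.PQ H S G T).IsSink ⟨.old u, Or.inr hu⟩ :=
    isSink_old _ (fun _ _ hr => hr.2 (hGH hr.1)) fun _ _ hr => by
      obtain ⟨_, _, hr'⟩ := hr.2.2.2.1
      exact hr'.2 (hGH hr'.1)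
  have h := reaches_eq_of_isSink (hsink hv)
    (hcof.reaches_of_not_isRegular (not_isRegular_of_isSink (hsink hw)) _)
  exact hvw (by cases congrArg Subtype.val h; rfl)

theorem not_cofinal_of_pairLT_of_pairLT (hHS : E.Admissible H S) (hKR : E.Admissible K R)
    (hGT : E.Admissible G T) (h₁ : pairLT (H, S) (K, R)) (h₂ : pairLT (K, R) (G, T)) :
    ¬ (E.PQ H S G T).Cofinal := by
  rcases exists_mem_diff_of_pairLT hHS.2.2 h₁ with ⟨u₀, hu₀K, hu₀H⟩ | ⟨hHK, v₀, hv₀R, hv₀S⟩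
  · exact not_cofinal_of_mem_fst_diff hKR hGT h₁.1 h₂ hu₀K hu₀H
  subst hHK
  have hv₀ : v₀ ∈ E.breaking H := hKR.2.2 hv₀R
  have hv₀GT : v₀ ∈ G ∪ T := h₂.1.2 hv₀R
  by_cases hedge : ∃ e, E.s e = v₀ ∧ E.r e ∈ G \ H
  · obtain ⟨e, he, hr⟩ := hedge
    exact not_cofinal_of_breaking_of_edge hGT.1 hv₀ hv₀GT hv₀S he hr
  push Not at hedge
  by_cases hGH : G ⊆ H
  · rcases exists_mem_diff_of_pairLT hKR.2.2 h₂ with ⟨w, hwG, hwH⟩ | ⟨-, w, hwT, hwR⟩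
    · exact (hwH (hGH hwG)).elim
    have hwH : w ∉ H := fun h => (hGT.2.2 hwT).1 (h₂.1.1 h)
    exact not_cofinal_of_subset_of_ne hGH ⟨hv₀GT.resolve_left fun h => hv₀.1 (hGH h), hv₀S⟩
      ⟨hwT, fun h => (h₁.1.2 h).elim hwH hwR⟩ fun h => hwR (h ▸ hv₀R)
  · obtain ⟨g₀, hg₀G, hg₀H⟩ := Set.not_subset.1 hGH
    exact not_cofinal_of_breaking_of_not_edge hGT.1 hv₀ hv₀GT hv₀S hedge ⟨hg₀G, hg₀H⟩

end PQ

theorem AdmPair.covBy_of_cofinal {a b : E.AdmPair} (hab : a < b)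
    (hcof : (E.PQ a.1.1 a.1.2 b.1.1 b.1.2).Cofinal) : a ⋖ b :=
  ⟨hab, fun c hac hcb => PQ.not_cofinal_of_pairLT_of_pairLT a.2 c.2 b.2
    (AdmPair.lt_iff_pairLT.1 hac) (AdmPair.lt_iff_pairLT.1 hcb) hcof⟩

theorem HasCompSeries.exists_covBy_chain (h : E.HasCompSeries) :
    ∃ (n : ℕ) (d : ℕ → E.AdmPair), d 0 = ⊥ ∧ d n = ⊤ ∧ ∀ i < n, d i ⋖ d (i + 1) := by
  obtain ⟨n, c, hc0, hcn, hadm, hlt, hcof⟩ := h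
  let d : ℕ → E.AdmPair := fun i => ⟨c (min i n), hadm _ (min_le_right i n)⟩
  have hd : ∀ i ≤ n, (d i).1 = c i := fun i hi => by simp only [d, min_eq_left hi]
  refine ⟨n, d, Subtype.ext ?_, Subtype.ext ?_, fun i hi => AdmPair.covBy_of_cofinal ?_ ?_⟩
  · rw [hd 0 n.zero_le, hc0]; rfl
  · rw [hd n le_rfl, hcn]; rfl
  · rw [AdmPair.lt_iff_pairLT, hd i hi.le, hd (i + 1) hi]
    exact hlt i hi
  · rw [hd i hi.le, hd (i + 1) hi]
    exact hcof i hi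

end Quotient

end DGraph

/-- Corollary: if there is an infinite strictly increasing chain of
admissible pairs above `(∅,∅)`, or an infinite strictly decreasing chain of
admissible pairs below `(E⁰,∅)`, then `E` has no composition series. -/
theorem no_comp_series_of_infinite_chain (E : DGraph)
    (c : ℕ → Set E.V × Set E.V)
    (hadm : ∀ n, E.Admissible (c n).1 (c n).2)
    (h : (DGraph.pairLT (∅, ∅) (c 0) ∧ ∀ n, DGraph.pairLT (c n) (c (n + 1))) ∨
         (DGraph.pairLT (c 0) ((Set.univ : Set E.V), ∅) ∧
           ∀ n, DGraph.pairLT (c (n + 1)) (c n))) :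
    ¬ E.HasCompSeries := by
  intro hcs
  obtain ⟨n, d, hd0, hdn, hcov⟩ := hcs.exists_covBy_chain
  let b : ℕ → E.AdmPair := fun k => ⟨c k, hadm k⟩
  have hbd : ∀ k, b k ∈ Set.Icc (d 0) (d n) := fun k => ⟨hd0 ▸ bot_le, hdn ▸ le_top⟩
  rcases h with ⟨-, hinc⟩ | ⟨-, hdec⟩
  · exact not_strictMono_of_covBy_chain hcov
      (strictMono_nat_of_lt_succ fun k => DGraph.AdmPair.lt_iff_pairLT.2 (hinc k)) hbd
  · exact not_strictAnti_of_covBy_chain hcov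
      (strictAnti_nat_of_succ_lt fun k => DGraph.AdmPair.lt_iff_pairLT.2 (hdec k)) hbd
end
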